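/- arXiv:1810.06952 — 5 statements merged into one kernel-verified Lean document; each statement's English description precedes it below -/
import Mathlib

section
/- Under the hypotheses in the context, the product on 𝔥 defined by the case formula is commutative, associative, and has [1]_0 (the unit of S placed in degree 0) as a two-sided unit. -/
/-- The data modeling the ring of insertions: `S = H*(X)`, `R = H*(D)`,
`res = ι*` the restriction, `gys = ι_!` the Gysin pushforward, `δ = [D]|_D`,
with the projection formula and `ι* ∘ ι_! = δ·`. -/
structure InsertionData (S R : Type) [CommRing S] [CommRing R] where
  res : S →+* R
  gys : R →+ S
  δ : R
  proj : ∀ (a : S) (x : R), gys (res a * x) = a * gys x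
  comp : ∀ x : R, res (gys x) = δ * x

/-- The ring of insertions `𝔥 = 𝔥₀ ⊕ ⊕_{i ≠ 0} 𝔥_i` with `𝔥₀ = S` and `𝔥_i = R` for
`i ≠ 0`, represented as a pair of the degree-0 component and a finitely supported
function on the nonzero degrees. -/
abbrev Hins (S R : Type) [CommRing S] [CommRing R] : Type :=
  S × ({i : ℤ // i ≠ 0} →₀ R)

/-- The weight in the case formula for the insertion product: an extra factor `δ`
appears exactly when both `i, j < 0`, or when `i + j > 0` and one of `i, j` is
negative. -/
noncomputable def wgt {R : Type} [CommRing R] (δ : R) (i j : ℤ) : R :=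
  if (i < 0 ∧ j < 0) ∨ (0 < i + j ∧ (i < 0 ∨ j < 0)) then δ else 1

/-- The insertion product on `𝔥`, the bilinear extension of the case formula:
`[α]₀·[β]₀ = [αβ]₀`, `[α]₀·[β]_j = [res(α)β]_j`, `[α]_i·[β]₀ = [α·res(β)]_i`,
`[α]_i·[β]_{-i} = [gys(αβ)]₀`, and for `i, j ≠ 0` with `i + j ≠ 0`,
`[α]_i·[β]_j = [wgt δ i j · αβ]_{i+j}`. -/
noncomputable def mulH {S R : Type} [CommRing S] [CommRing R]
    (d : InsertionData S R) (x y : Hins S R) : Hins S R :=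
  ( x.1 * y.1 + x.2.sum (fun i α => d.gys (α * y.2 ⟨-i.1, neg_ne_zero.mpr i.2⟩)),
    y.2.mapRange (fun β => d.res x.1 * β) (by simp)
    + x.2.mapRange (fun α => α * d.res y.1) (by simp)
    + x.2.sum (fun i α => y.2.sum (fun j β =>
        if h : i.1 + j.1 ≠ 0 then
          Finsupp.single ⟨i.1 + j.1, h⟩ (wgt d.δ i.1 j.1 * (α * β))
        else 0)) )

section Aux
variable {S R : Type} [CommRing S] [CommRing R] (d : InsertionData S R)

lemma wgt_comm (δ : R) (i j : ℤ) : wgt δ i j = wgt δ j i := by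
  unfold wgt; split_ifs <;> first | rfl | (exfalso; omega)

lemma wgt_cocycle (δ : R) {i j k : ℤ} (hij : i + j ≠ 0) (hjk : j + k ≠ 0)
    (hijk : i + j + k ≠ 0) (hi : i ≠ 0) (hj : j ≠ 0) (hk : k ≠ 0) :
    wgt δ i j * wgt δ (i+j) k = wgt δ i (j+k) * wgt δ j k := by
  unfold wgt; split_ifs <;> first | ring1 | (exfalso; omega)

lemma wgt_zero_sum (δ : R) {i j k : ℤ} (hij : i + j ≠ 0) (hjk : j + k ≠ 0)
    (hijk : i + j + k = 0) (hi : i ≠ 0) (hj : j ≠ 0) (hk : k ≠ 0) :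
    wgt δ i j = wgt δ j k := by
  unfold wgt; split_ifs <;> first | rfl | (exfalso; omega)

lemma wgt_delta_left (δ : R) {i j k : ℤ} (hij : i + j = 0) (hjk : j + k ≠ 0)
    (hi : i ≠ 0) (hj : j ≠ 0) (hk : k ≠ 0) :
    wgt δ i (j+k) * wgt δ j k = δ := by
  unfold wgt; split_ifs <;> first | ring1 | (exfalso; omega)

lemma wgt_delta_right (δ : R) {i j k : ℤ} (hjk : j + k = 0) (hij : i + j ≠ 0)
    (hi : i ≠ 0) (hj : j ≠ 0) (hk : k ≠ 0) :
    wgt δ i j * wgt δ (i+j) k = δ := by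
  unfold wgt; split_ifs <;> first | ring1 | (exfalso; omega)

end Aux
section Comp
variable {S R : Type} [CommRing S] [CommRing R] (d : InsertionData S R)

lemma mul_ee (s t : S) : mulH d (s, 0) (t, 0) = (s * t, 0) := by
  unfold mulH; simp

lemma mul_ef (s : S) (j : ℤ) (hj : j ≠ 0) (β : R) :
    mulH d (s, 0) (0, Finsupp.single ⟨j, hj⟩ β)
      = (0, Finsupp.single ⟨j, hj⟩ (d.res s * β)) := by
  unfold mulH; simp [Finsupp.mapRange_single]

lemma mul_fe (i : ℤ) (hi : i ≠ 0) (α : R) (t : S) :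
    mulH d (0, Finsupp.single ⟨i, hi⟩ α) (t, 0)
      = (0, Finsupp.single ⟨i, hi⟩ (α * d.res t)) := by
  unfold mulH; simp [Finsupp.mapRange_single, Finsupp.sum_single_index]

lemma mul_ff (i j : ℤ) (hi : i ≠ 0) (hj : j ≠ 0) (α β : R) :
    mulH d (0, Finsupp.single ⟨i, hi⟩ α) (0, Finsupp.single ⟨j, hj⟩ β)
      = if h : i + j = 0 then (d.gys (α * β), 0)
        else (0, Finsupp.single ⟨i + j, h⟩ (wgt d.δ i j * (α * β))) := by
  have hne : ((⟨j, hj⟩ : {n : ℤ // n ≠ 0}) = ⟨-i, neg_ne_zero.mpr hi⟩) ↔ i + j = 0 := by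
    simp only [Subtype.mk.injEq]; omega
  unfold mulH
  rw [Finsupp.sum_single_index (by simp), Finsupp.sum_single_index (by simp),
      Finsupp.sum_single_index (by simp)]
  simp only [map_zero, zero_mul, mul_zero, Finsupp.single_zero, Finsupp.mapRange_single,
    zero_add, add_zero, Finsupp.single_apply]
  by_cases h : i + j = 0
  · rw [dif_pos h, if_pos (hne.mpr h), dif_neg (not_not_intro h)]
    try simp
  · rw [dif_neg h, if_neg (fun hc => h (hne.mp hc)), dif_pos h]
    try simp

end Comp
section Add
variable {S R : Type} [CommRing S] [CommRing R] (d : InsertionData S R)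

lemma key_apply (δ : R) (i j k : {n : ℤ // n ≠ 0}) (c : R) :
    (if h : i.1 + j.1 ≠ 0 then Finsupp.single ⟨i.1 + j.1, h⟩ (wgt δ i.1 j.1 * c) else 0) k
      = if i.1 + j.1 = k.1 then wgt δ i.1 j.1 * c else 0 := by
  by_cases h : i.1 + j.1 ≠ 0
  · rw [dif_pos h, Finsupp.single_apply]
    congr 1
    simp [Subtype.ext_iff, eq_comm]
  · rw [dif_neg h, if_neg (fun hc => k.2 (by omega)), Finsupp.coe_zero, Pi.zero_apply]

lemma mulH_add_left (x y z : Hins S R) :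
    mulH d (x + y) z = mulH d x z + mulH d y z := by
  unfold mulH
  refine Prod.ext ?_ ?_
  · simp only [Prod.fst_add, Prod.snd_add]
    rw [Finsupp.sum_add_index' (by simp) (by intros; simp [add_mul, map_add])]
    ring
  · ext k
    simp only [Prod.fst_add, Prod.snd_add, Finsupp.add_apply, Finsupp.mapRange_apply,
      Finsupp.sum_apply, map_add, add_mul, key_apply]
    rw [Finsupp.sum_add_index' (by intros; simp) (by
      intro a b₁ b₂
      rw [← Finsupp.sum_add]
      refine Finsupp.sum_congr fun j _ => ?_
      split_ifs <;> ring)]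
    ring

lemma mulH_add_right (x y z : Hins S R) :
    mulH d x (y + z) = mulH d x y + mulH d x z := by
  unfold mulH
  refine Prod.ext ?_ ?_
  · simp only [Prod.fst_add, Prod.snd_add, Finsupp.add_apply, mul_add, map_add]
    rw [Finsupp.sum_add]
    ring
  · ext k
    simp only [Prod.fst_add, Prod.snd_add, Finsupp.add_apply, Finsupp.mapRange_apply,
      Finsupp.sum_apply, map_add, mul_add, key_apply]
    rw [show (fun (i : {n : ℤ // n ≠ 0}) (α : R) => ((y.2 + z.2).sum fun j β =>
          if i.1 + j.1 = k.1 then wgt d.δ i.1 j.1 * (α * β) else 0))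
        = fun i α => (y.2.sum fun j β => if i.1 + j.1 = k.1 then wgt d.δ i.1 j.1 * (α * β) else 0)
          + (z.2.sum fun j β => if i.1 + j.1 = k.1 then wgt d.δ i.1 j.1 * (α * β) else 0)
      from funext fun i => funext fun α =>
        Finsupp.sum_add_index' (by intros; simp) (by intros; split_ifs <;> ring)]
    rw [Finsupp.sum_add]
    ring

lemma mulH_zero_left (x : Hins S R) : mulH d 0 x = 0 := by
  unfold mulH
  refine Prod.ext (by simp) ?_
  ext k
  simp [Finsupp.mapRange_apply]

lemma mulH_zero_right (x : Hins S R) : mulH d x 0 = 0 := by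
  unfold mulH
  refine Prod.ext (by simp) ?_
  ext k
  simp [Finsupp.mapRange_apply]

lemma hins_induction {P : Hins S R → Prop} (h0 : P 0)
    (hadd : ∀ x y, P x → P y → P (x + y))
    (he : ∀ s : S, P (s, 0))
    (hf : ∀ (i : ℤ) (hi : i ≠ 0) (α : R), P (0, Finsupp.single ⟨i, hi⟩ α)) :
    ∀ x : Hins S R, P x := by
  rintro ⟨s, g⟩
  have hd : ((s, g) : Hins S R) = (s, 0) + (0, g) := by simp
  rw [hd]
  refine hadd _ _ (he s) ?_
  clear hd
  induction g using Finsupp.induction with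
  | zero => exact h0
  | single_add a b f' _ _ ih =>
    have h2 : ((0, Finsupp.single a b + f') : Hins S R) = (0, Finsupp.single a b) + (0, f') := by
      simp
    rw [h2]
    exact hadd _ _ (by obtain ⟨i, hi⟩ := a; exact hf i hi b) ih

end Add
section Main
variable {S R : Type} [CommRing S] [CommRing R] (d : InsertionData S R)

lemma pair_single_congr {a b : {n : ℤ // n ≠ 0}} (h : a.1 = b.1) {c c' : R} (hc : c = c') :
    ((0 : S), Finsupp.single a c) = ((0 : S), Finsupp.single b c') := by
  have hab : a = b := Subtype.ext h
  subst hab; rw [hc]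

lemma mulH_comm : ∀ x y : Hins S R, mulH d x y = mulH d y x := by
  intro x
  induction x using hins_induction with
  | h0 => intro y; rw [mulH_zero_left, mulH_zero_right]
  | hadd a b ha hb => intro y; rw [mulH_add_left, mulH_add_right, ha, hb]
  | he s =>
    intro y
    induction y using hins_induction with
    | h0 => rw [mulH_zero_left, mulH_zero_right]
    | hadd a b ha hb => rw [mulH_add_left, mulH_add_right, ha, hb]
    | he t => rw [mul_ee, mul_ee, mul_comm]
    | hf j hj β => rw [mul_ef, mul_fe, mul_comm]
  | hf i hi α =>
    intro y
    induction y using hins_induction with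
    | h0 => rw [mulH_zero_left, mulH_zero_right]
    | hadd a b ha hb => rw [mulH_add_left, mulH_add_right, ha, hb]
    | he t => rw [mul_fe, mul_ef, mul_comm]
    | hf j hj β =>
      rw [mul_ff, mul_ff]
      by_cases h : i + j = 0
      · rw [dif_pos h, dif_pos (by omega)]
        rw [mul_comm α β]
      · rw [dif_neg h, dif_neg (fun hc => h (by omega))]
        exact pair_single_congr (by simp [add_comm]) (by rw [wgt_comm, mul_comm α β])

lemma mulH_one_left : ∀ x : Hins S R, mulH d ((1 : S), 0) x = x := by
  intro x
  induction x using hins_induction with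
  | h0 => rw [mulH_zero_right]
  | hadd a b ha hb => rw [mulH_add_right, ha, hb]
  | he s => rw [mul_ee, one_mul]
  | hf j hj β => rw [mul_ef, map_one, one_mul]

end Main
section Assoc
variable {S R : Type} [CommRing S] [CommRing R] (d : InsertionData S R)

lemma mulH_assoc : ∀ x y z : Hins S R, mulH d (mulH d x y) z = mulH d x (mulH d y z) := by
  intro x
  induction x using hins_induction with
  | h0 => intro y z; rw [mulH_zero_left, mulH_zero_left, mulH_zero_left]
  | hadd a b ha hb =>
    intro y z
    rw [mulH_add_left, mulH_add_left, mulH_add_left, ha, hb]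
  | he s =>
    intro y
    induction y using hins_induction with
    | h0 => intro z; simp only [mulH_zero_left, mulH_zero_right]
    | hadd a b ha hb =>
      intro z
      rw [mulH_add_right, mulH_add_left, mulH_add_left, mulH_add_right, ha, hb]
    | he t =>
      intro z
      induction z using hins_induction with
      | h0 => rw [mulH_zero_right, mulH_zero_right, mulH_zero_right]
      | hadd a b ha hb => rw [mulH_add_right, mulH_add_right, mulH_add_right, ha, hb]
      | he u => rw [mul_ee, mul_ee, mul_ee, mul_ee, mul_assoc]
      | hf k hk γ => rw [mul_ee, mul_ef, mul_ef, mul_ef, map_mul, mul_assoc]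
    | hf j hj β =>
      intro z
      induction z using hins_induction with
      | h0 => rw [mulH_zero_right, mulH_zero_right, mulH_zero_right]
      | hadd a b ha hb => rw [mulH_add_right, mulH_add_right, mulH_add_right, ha, hb]
      | he u => rw [mul_ef, mul_fe, mul_fe, mul_ef, mul_assoc]
      | hf k hk γ =>
        rw [mul_ef, mul_ff, mul_ff]
        by_cases h : j + k = 0
        · rw [dif_pos h, dif_pos h, mul_ee, mul_assoc, d.proj]
        · rw [dif_neg h, dif_neg h, mul_ef]
          exact pair_single_congr rfl (by ring)
  | hf i hi α =>
    intro y
    induction y using hins_induction with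
    | h0 => intro z; simp only [mulH_zero_left, mulH_zero_right]
    | hadd a b ha hb =>
      intro z
      rw [mulH_add_right, mulH_add_left, mulH_add_left, mulH_add_right, ha, hb]
    | he t =>
      intro z
      induction z using hins_induction with
      | h0 => rw [mulH_zero_right, mulH_zero_right, mulH_zero_right]
      | hadd a b ha hb => rw [mulH_add_right, mulH_add_right, mulH_add_right, ha, hb]
      | he u => rw [mul_fe, mul_ee, mul_fe, mul_fe, map_mul, mul_assoc]
      | hf k hk γ =>
        rw [mul_fe, mul_ef, mul_ff, mul_ff]
        by_cases h : i + k = 0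
        · rw [dif_pos h, dif_pos h]
          rw [show α * d.res t * γ = α * (d.res t * γ) from mul_assoc ..]
        · rw [dif_neg h, dif_neg h]
          exact pair_single_congr rfl (by ring)
    | hf j hj β =>
      intro z
      induction z using hins_induction with
      | h0 => rw [mulH_zero_right, mulH_zero_right, mulH_zero_right]
      | hadd a b ha hb => rw [mulH_add_right, mulH_add_right, mulH_add_right, ha, hb]
      | he u =>
        rw [mul_ff, mul_fe, mul_ff]
        by_cases h : i + j = 0
        · rw [dif_pos h, dif_pos h, mul_ee]
          rw [show α * (β * d.res u) = d.res u * (α * β) from by ring, d.proj, mul_comm]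
        · rw [dif_neg h, dif_neg h, mul_fe]
          exact pair_single_congr rfl (by ring)
      | hf k hk γ =>
        rw [mul_ff d i j hi hj, mul_ff d j k hj hk]
        by_cases h1 : i + j = 0 <;> by_cases h2 : j + k = 0
        · -- i + j = 0, j + k = 0
          rw [dif_pos h1, dif_pos h2, mul_ef, mul_fe, d.comp, d.comp]
          exact pair_single_congr (by dsimp; omega) (by ring)
        · -- i + j = 0, j + k ≠ 0
          rw [dif_pos h1, dif_neg h2, mul_ef, mul_ff d i (j+k) hi h2, d.comp,
            dif_neg (show ¬i + (j + k) = 0 by omega)]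
          refine pair_single_congr (by dsimp; omega) ?_
          linear_combination (-(α * (β * γ))) * wgt_delta_left d.δ h1 h2 hi hj hk
        · -- i + j ≠ 0, j + k = 0
          rw [dif_neg h1, dif_pos h2, mul_ff d (i+j) k h1 hk, mul_fe, d.comp,
            dif_neg (show ¬i + j + k = 0 by omega)]
          refine pair_single_congr (by dsimp; omega) ?_
          linear_combination (α * (β * γ)) * wgt_delta_right d.δ h2 h1 hi hj hk
        · -- i + j ≠ 0, j + k ≠ 0
          rw [dif_neg h1, dif_neg h2, mul_ff d (i+j) k h1 hk, mul_ff d i (j+k) hi h2]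
          by_cases h3 : i + j + k = 0
          · rw [dif_pos h3, dif_pos (show i + (j + k) = 0 by omega)]
            rw [show wgt d.δ i j * (α * β) * γ = α * (wgt d.δ j k * (β * γ)) from by
              rw [wgt_zero_sum d.δ h1 h2 h3 hi hj hk]; ring]
          · rw [dif_neg h3, dif_neg (show ¬i + (j + k) = 0 by omega)]
            refine pair_single_congr (by dsimp; omega) ?_
            linear_combination (α * (β * γ)) * wgt_cocycle d.δ h1 h2 h3 hi hj hk

end Assoc

/-- The insertion product on `𝔥` is commutative, associative, and has `[1]₀`
as a two-sided unit. -/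
theorem insertion_product_comm_assoc_unital {S R : Type} [CommRing S] [CommRing R]
    (d : InsertionData S R) :
    (∀ x y : Hins S R, mulH d x y = mulH d y x) ∧
    (∀ x y z : Hins S R, mulH d (mulH d x y) z = mulH d x (mulH d y z)) ∧
    (∀ x : Hins S R, mulH d ((1 : S), 0) x = x ∧ mulH d x ((1 : S), 0) = x) := by
  refine ⟨mulH_comm d, mulH_assoc d, fun x => ⟨mulH_one_left d x, ?_⟩⟩
  rw [mulH_comm d x ((1 : S), 0), mulH_one_left d x]
end

section
/- Suppose S and R are ℤ-graded commutative rings, ρ : S → R is a graded ring homomorphism, ι : R → S raises degree by 1, and δ ∈ R is homogeneous of degree 1, with ι(ρ(a)x) = aι(x) and ρ(ι(x)) = δx. Define deg^{(2)}([α]_i) = deg(α) if i ≥ 0 and deg(α)+1 if i < 0, for homogeneous α. Then the insertion product is additive for deg^{(2)}: deg^{(2)}([α]_i·[β]_j) = deg^{(2)}([α]_i) + deg^{(2)}([β]_j) whenever the product is nonzero and homogeneous. -/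
/-- `x ∈ 𝔥` is homogeneous of degree `k` for `deg⁽¹⁾` (it lies in `𝔥_k`) and of degree `n`
for `deg⁽²⁾`: its component is a cohomology class of degree `n` if `k ≥ 0`, and of degree
`n - 1` if `k < 0` (the grading `deg⁽²⁾` is shifted by `+1` on the negative summands). -/
def homogTwo {S R : Type} [CommRing S] [CommRing R]
    (SD : ℤ → AddSubgroup S) (RD : ℤ → AddSubgroup R)
    (k n : ℤ) (x : Hins S R) : Prop :=
  (k = 0 → x.2 = 0 ∧ x.1 ∈ SD n) ∧
  (∀ h : k ≠ 0, x.1 = 0 ∧ (∀ i : {i : ℤ // i ≠ 0}, i.1 ≠ k → x.2 i = 0) ∧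
    x.2 ⟨k, h⟩ ∈ RD (if k < 0 then n - 1 else n))

/-! A homogeneous element of `𝔥` is a single monomial `[a]_0` or `[α]_k`, so it suffices to
multiply monomials. Each of the five cases of the insertion product is then a degree count:
`ρ` preserves degree, and the `+1` of `δ` or of the Gysin map `ι` exactly compensates the
shift of `deg⁽²⁾` on negative summands that is lost or gained in the product. -/

section Products

variable {S R : Type} [CommRing S] [CommRing R] (d : InsertionData S R)

theorem mulH_inl_inl (a b : S) : mulH d (a, 0) (b, 0) = (a * b, 0) := by
  simp [mulH]

theorem mulH_inl_single (a : S) (j : {i : ℤ // i ≠ 0}) (β : R) :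
    mulH d (a, 0) (0, Finsupp.single j β) = (0, Finsupp.single j (d.res a * β)) := by
  simp [mulH]

theorem mulH_single_inl (i : {i : ℤ // i ≠ 0}) (α : R) (b : S) :
    mulH d (0, Finsupp.single i α) (b, 0) = (0, Finsupp.single i (α * d.res b)) := by
  simp [mulH]

theorem mulH_single_single_of_add_eq_zero (i j : {i : ℤ // i ≠ 0}) (α β : R)
    (hij : i.1 + j.1 = 0) :
    mulH d (0, Finsupp.single i α) (0, Finsupp.single j β) = (d.gys (α * β), 0) := by
  have hj : j = ⟨-i.1, neg_ne_zero.mpr i.2⟩ := Subtype.ext (eq_neg_of_add_eq_zero_right hij)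
  subst hj
  simp [mulH]

theorem mulH_single_single_of_add_ne_zero (i j : {i : ℤ // i ≠ 0}) (α β : R)
    (hij : i.1 + j.1 ≠ 0) :
    mulH d (0, Finsupp.single i α) (0, Finsupp.single j β) =
      (0, Finsupp.single ⟨i.1 + j.1, hij⟩ (wgt d.δ i.1 j.1 * (α * β))) := by
  have hj : j ≠ ⟨-i.1, neg_ne_zero.mpr i.2⟩ := fun h => hij (by simp [h])
  simp [mulH, Finsupp.single_apply, hj, hij]

end Products

section Homogeneous

variable {S R : Type} [CommRing S] [CommRing R]
  {SD : ℤ → AddSubgroup S} {RD : ℤ → AddSubgroup R}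

theorem homogTwo_zero_iff {n : ℤ} {x : Hins S R} :
    homogTwo SD RD 0 n x ↔ ∃ a ∈ SD n, x = (a, 0) := by
  constructor
  · rintro ⟨hx, -⟩
    obtain ⟨hx2, hx1⟩ := hx rfl
    exact ⟨x.1, hx1, Prod.ext rfl hx2⟩
  · rintro ⟨a, ha, rfl⟩
    exact ⟨fun _ => ⟨rfl, ha⟩, fun h => absurd rfl h⟩

theorem homogTwo_iff_of_ne_zero {k n : ℤ} (hk : k ≠ 0) {x : Hins S R} :
    homogTwo SD RD k n x ↔
      ∃ α ∈ RD (if k < 0 then n - 1 else n), x = (0, Finsupp.single ⟨k, hk⟩ α) := by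
  constructor
  · rintro ⟨-, hx⟩
    obtain ⟨hx1, hxsupp, hxval⟩ := hx hk
    refine ⟨_, hxval, Prod.ext hx1 (Finsupp.ext fun b => ?_)⟩
    rcases eq_or_ne b ⟨k, hk⟩ with rfl | hb
    · simp
    · rw [Finsupp.single_apply, if_neg (Ne.symm hb)]
      exact hxsupp b fun h => hb (Subtype.ext h)
  · rintro ⟨α, hα, rfl⟩
    refine ⟨fun h => absurd h hk, fun _ => ⟨rfl, fun b hb => ?_, by simpa using hα⟩⟩
    simp [Subtype.ext_iff, Ne.symm hb]

end Homogeneous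

section Degrees

variable {S R : Type} [CommRing S] [CommRing R] {SD : ℤ → AddSubgroup S} {RD : ℤ → AddSubgroup R}

theorem mul_mem_shifted_left
    (hmulR : ∀ (p q : ℤ) (a b : R), a ∈ RD p → b ∈ RD q → a * b ∈ RD (p + q))
    {j m n : ℤ} {a β : R} (ha : a ∈ RD m) (hβ : β ∈ RD (if j < 0 then n - 1 else n)) :
    a * β ∈ RD (if j < 0 then m + n - 1 else m + n) := by
  convert hmulR _ _ _ _ ha hβ using 2
  split_ifs <;> ring

theorem mul_mem_shifted_right
    (hmulR : ∀ (p q : ℤ) (a b : R), a ∈ RD p → b ∈ RD q → a * b ∈ RD (p + q))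
    {i m n : ℤ} {α b : R} (hα : α ∈ RD (if i < 0 then m - 1 else m)) (hb : b ∈ RD n) :
    α * b ∈ RD (if i < 0 then m + n - 1 else m + n) := by
  rw [mul_comm, add_comm m n]
  exact mul_mem_shifted_left hmulR hb hα

theorem wgt_mul_mem
    (hmulR : ∀ (p q : ℤ) (a b : R), a ∈ RD p → b ∈ RD q → a * b ∈ RD (p + q))
    {δ : R} (hδ : δ ∈ RD 1) {i j m n : ℤ} (hij : i + j ≠ 0) {α β : R}
    (hα : α ∈ RD (if i < 0 then m - 1 else m)) (hβ : β ∈ RD (if j < 0 then n - 1 else n)) :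
    wgt δ i j * (α * β) ∈ RD (if i + j < 0 then m + n - 1 else m + n) := by
  have hαβ := hmulR _ _ _ _ hα hβ
  by_cases hw : (i < 0 ∧ j < 0) ∨ (0 < i + j ∧ (i < 0 ∨ j < 0))
  · rw [wgt, if_pos hw]
    convert hmulR _ _ _ _ hδ hαβ using 2
    split_ifs <;> omega
  · rw [wgt, if_neg hw, one_mul]
    convert hαβ using 2
    split_ifs <;> omega

/-- Exactly one of `α`, `β` sits in a negative summand, so their degrees add up to `m + n - 1`,
which the Gysin map raises back to `m + n`. -/
theorem gys_mul_mem_of_add_eq_zero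
    (hmulR : ∀ (p q : ℤ) (a b : R), a ∈ RD p → b ∈ RD q → a * b ∈ RD (p + q))
    {g : R →+ S} (hg : ∀ (p : ℤ) (x : R), x ∈ RD p → g x ∈ SD (p + 1))
    {i j m n : ℤ} (hi : i ≠ 0) (hij : i + j = 0) {α β : R}
    (hα : α ∈ RD (if i < 0 then m - 1 else m)) (hβ : β ∈ RD (if j < 0 then n - 1 else n)) :
    g (α * β) ∈ SD (m + n) := by
  convert hg _ _ (hmulR _ _ _ _ hα hβ) using 2
  split_ifs <;> omega

end Degrees

/-- If `S`, `R` are graded, `res` is graded, `gys` raises degree by `1` and `δ` has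
degree `1`, then the insertion product is additive for the grading `deg⁽²⁾`:
the product of homogeneous elements of `deg⁽¹⁾`-degrees `i, j` and `deg⁽²⁾`-degrees
`m, n` is homogeneous of `deg⁽¹⁾`-degree `i + j` and `deg⁽²⁾`-degree `m + n`. -/
theorem insertion_product_deg_two_additive {S R : Type} [CommRing S] [CommRing R]
    (d : InsertionData S R)
    (SD : ℤ → AddSubgroup S) (RD : ℤ → AddSubgroup R)
    (hmulS : ∀ (p q : ℤ) (a b : S), a ∈ SD p → b ∈ SD q → a * b ∈ SD (p + q))
    (hmulR : ∀ (p q : ℤ) (a b : R), a ∈ RD p → b ∈ RD q → a * b ∈ RD (p + q))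
    (hres : ∀ (p : ℤ) (a : S), a ∈ SD p → d.res a ∈ RD p)
    (hgys : ∀ (p : ℤ) (x : R), x ∈ RD p → d.gys x ∈ SD (p + 1))
    (hδ : d.δ ∈ RD 1)
    (i j m n : ℤ) (x y : Hins S R)
    (hx : homogTwo SD RD i m x) (hy : homogTwo SD RD j n y) :
    homogTwo SD RD (i + j) (m + n) (mulH d x y) := by
  rcases eq_or_ne i 0 with rfl | hi <;> rcases eq_or_ne j 0 with rfl | hj
  · obtain ⟨a, ha, rfl⟩ := homogTwo_zero_iff.1 hx
    obtain ⟨b, hb, rfl⟩ := homogTwo_zero_iff.1 hy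
    rw [mulH_inl_inl]
    exact homogTwo_zero_iff.2 ⟨_, hmulS _ _ _ _ ha hb, rfl⟩
  · obtain ⟨a, ha, rfl⟩ := homogTwo_zero_iff.1 hx
    obtain ⟨β, hβ, rfl⟩ := (homogTwo_iff_of_ne_zero hj).1 hy
    rw [mulH_inl_single, zero_add]
    exact (homogTwo_iff_of_ne_zero hj).2 ⟨_, mul_mem_shifted_left hmulR (hres _ _ ha) hβ, rfl⟩
  · obtain ⟨α, hα, rfl⟩ := (homogTwo_iff_of_ne_zero hi).1 hx
    obtain ⟨b, hb, rfl⟩ := homogTwo_zero_iff.1 hy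
    rw [mulH_single_inl, add_zero]
    exact (homogTwo_iff_of_ne_zero hi).2 ⟨_, mul_mem_shifted_right hmulR hα (hres _ _ hb), rfl⟩
  · obtain ⟨α, hα, rfl⟩ := (homogTwo_iff_of_ne_zero hi).1 hx
    obtain ⟨β, hβ, rfl⟩ := (homogTwo_iff_of_ne_zero hj).1 hy
    rcases eq_or_ne (i + j) 0 with hij | hij
    · rw [mulH_single_single_of_add_eq_zero d _ _ _ _ hij, hij]
      exact homogTwo_zero_iff.2 ⟨_, gys_mul_mem_of_add_eq_zero hmulR hgys hi hij hα hβ, rfl⟩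
    · rw [mulH_single_single_of_add_ne_zero d _ _ _ _ hij]
      exact (homogTwo_iff_of_ne_zero hij).2 ⟨_, wgt_mul_mem hmulR hδ hij hα hβ, rfl⟩
end

section
/- With the trace maps and pairing as in the context, the pairing on 𝔥 is invariant for the insertion product: (x·y, z) = (x, y·z) for all x, y, z ∈ 𝔥; moreover (x·y, z) equals the trilinear form A(x,y,z) which is totally symmetric. -/
/-- The pairing on `𝔥`: `([α]_i, [β]_j) = 0` for `i + j ≠ 0`, `([α]₀, [β]₀) = ∫_S αβ`,
and `([α]_i, [β]_{-i}) = ∫_R αβ` for `i ≠ 0`. -/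
noncomputable def pairH {k S R : Type} [Field k] [CommRing S] [CommRing R]
    [Algebra k S] [Algebra k R] (intS : S →ₗ[k] k) (intR : R →ₗ[k] k)
    (x y : Hins S R) : k :=
  intS (x.1 * y.1) + x.2.sum (fun i α => intR (α * y.2 ⟨-i.1, neg_ne_zero.mpr i.2⟩))

/-- The weight in the trilinear form `A`: an extra `δ` appears exactly when two of
the three contact orders `i, j, -(i+j)` are negative. -/
noncomputable def wgt3 {R : Type} [CommRing R] (δ : R) (i j : ℤ) : R :=
  if (i < 0 ∧ j < 0) ∨ (i < 0 ∧ -(i + j) < 0) ∨ (j < 0 ∧ -(i + j) < 0) then δ else 1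

/-- The trilinear form `A` of the paper: `A([α]_i, [β]_j, [γ]_l) = 0` unless
`i + j + l = 0`; `∫_S αβγ` if `i = j = l = 0`; `∫_R` of the product (with any
degree-`0` entry restricted via `res`) if exactly one index is negative; and
`∫_R δ·(product)` if exactly two indices are negative. -/
noncomputable def triA {k S R : Type} [Field k] [CommRing S] [CommRing R]
    [Algebra k S] [Algebra k R] (d : InsertionData S R)
    (intS : S →ₗ[k] k) (intR : R →ₗ[k] k) (x y z : Hins S R) : k :=
  intS (x.1 * y.1 * z.1)
  + y.2.sum (fun i β => intR (d.res x.1 * (β * z.2 ⟨-i.1, neg_ne_zero.mpr i.2⟩)))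
  + x.2.sum (fun i α => intR (d.res y.1 * (α * z.2 ⟨-i.1, neg_ne_zero.mpr i.2⟩)))
  + x.2.sum (fun i α => intR (d.res z.1 * (α * y.2 ⟨-i.1, neg_ne_zero.mpr i.2⟩)))
  + x.2.sum (fun i α => y.2.sum (fun j β =>
      if h : i.1 + j.1 ≠ 0 then
        intR (wgt3 d.δ i.1 j.1 * (α * β * z.2 ⟨-(i.1 + j.1), neg_ne_zero.mpr h⟩))
      else 0))

/-!
Write an element of `𝔥` as `(a, f)` with `a ∈ S` and `f` a finitely supported `R`-valued
function of the nonzero degrees. Expanding `(x·y, z)` and trading `∫_S ι(t) c` for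
`∫_R ρ(c) t` (by `proj` and `∫_S ∘ ι = ∫_R`) gives `A(x, y, z)`, which is `∫_S abc`, plus
three contractions `∑ᵢ ∫_R ρ(c) fᵢ g₋ᵢ`, each symmetric under `i ↦ -i`, plus the cubic term
`∑ w(i, j) fᵢ gⱼ h₋₍ᵢ₊ⱼ₎`. Extending `f, g, h` by zero to all of `ℤ` removes the side
condition `i + j ≠ 0` from the cubic term; then transposing its first two slots is a swap of
the order of summation, and transposing the last two is the substitution `j ↦ -(i + j)`, which
fixes the weight because `w` only depends on the unordered triple `{i, j, -(i + j)}`.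
Invariance follows from `(xy, z) = A(x, y, z) = A(y, z, x) = (yz, x) = (x, yz)`.
-/

theorem Finsupp.sum_apply_equiv_eq_sum {ι κ M N P : Type*} [Zero M] [Zero N] [AddCommMonoid P]
    (e : ι ≃ κ) (f : ι →₀ M) (g : κ →₀ N) (φ : ι → M → N → P)
    (hφl : ∀ i b, φ i 0 b = 0) (hφr : ∀ i a, φ i a 0 = 0) :
    f.sum (fun i a => φ i a (g (e i))) = g.sum (fun j b => φ (e.symm j) (f (e.symm j)) b) := by
  classical
  rw [f.sum_of_support_subset (s := f.support ∪ g.support.map e.symm.toEmbedding)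
      Finset.subset_union_left _ (fun i _ => hφl i _),
    g.sum_of_support_subset (s := g.support ∪ f.support.map e.toEmbedding)
      Finset.subset_union_left _ (fun j _ => hφr _ _)]
  refine Finset.sum_equiv e (fun i => ?_) (fun i _ => by simp)
  simp [or_comm]

section Weights

variable {R : Type} [CommRing R] (δ : R) (i j : ℤ)

theorem wgt_eq_wgt3 : wgt δ i j = wgt3 δ i j :=
  if_congr (by omega) rfl rfl

theorem wgt3_comm : wgt3 δ i j = wgt3 δ j i :=
  if_congr (by omega) rfl rfl

theorem wgt3_neg_add : wgt3 δ i (-(i + j)) = wgt3 δ i j :=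
  if_congr (by omega) rfl rfl

end Weights

namespace Hins

section Contraction

variable {k R : Type*} [AddCommMonoid k] [CommSemiring R]

def negIdx : {i : ℤ // i ≠ 0} ≃ {i : ℤ // i ≠ 0} :=
  (Equiv.neg ℤ).subtypeEquiv fun _ => neg_ne_zero.symm

def contract (ψ : R →+ k) (f g : {i : ℤ // i ≠ 0} →₀ R) : k :=
  f.sum fun i α => ψ (α * g (negIdx i))

theorem contract_comm (ψ : R →+ k) (f g : {i : ℤ // i ≠ 0} →₀ R) :
    contract ψ f g = contract ψ g f := by
  refine (Finsupp.sum_apply_equiv_eq_sum negIdx f g (fun _ α β => ψ (α * β))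
    (fun _ _ => by simp) (fun _ _ => by simp)).trans (Finsupp.sum_congr fun j _ => ?_)
  rw [mul_comm]
  rfl

theorem contract_add_left (ψ : R →+ k) (f₁ f₂ g : {i : ℤ // i ≠ 0} →₀ R) :
    contract ψ (f₁ + f₂) g = contract ψ f₁ g + contract ψ f₂ g :=
  Finsupp.sum_add_index' (fun _ => by simp) (fun _ _ _ => by rw [add_mul, map_add])

end Contraction

section Cubic

variable {k R : Type} [AddCommMonoid k] [CommRing R]

noncomputable def extendZero (f : {i : ℤ // i ≠ 0} →₀ R) : ℤ →₀ R :=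
  f.embDomain (Function.Embedding.subtype _)

theorem extendZero_apply (f : {i : ℤ // i ≠ 0} →₀ R) (i : {i : ℤ // i ≠ 0}) :
    extendZero f i = f i :=
  Finsupp.embDomain_apply_self _ f i

theorem extendZero_apply_zero (f : {i : ℤ // i ≠ 0} →₀ R) : extendZero f 0 = 0 :=
  Finsupp.embDomain_of_notMem_range _ f 0 (by simp)

theorem sum_extendZero {M : Type*} [AddCommMonoid M] (f : {i : ℤ // i ≠ 0} →₀ R)
    (φ : ℤ → R → M) : (extendZero f).sum φ = f.sum fun i a => φ i a :=
  Finsupp.sum_embDomain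

noncomputable def tri (δ : R) (ψ : R →+ k) (F G H : ℤ →₀ R) : k :=
  F.sum fun i α => G.sum fun j β => ψ (wgt3 δ i j * (α * β * H (-(i + j))))

theorem tri_swap₁₂ (δ : R) (ψ : R →+ k) (F G H : ℤ →₀ R) : tri δ ψ F G H = tri δ ψ G F H := by
  rw [tri, Finsupp.sum_comm]
  refine Finsupp.sum_congr fun j _ => Finsupp.sum_congr fun i _ => ?_
  rw [wgt3_comm, add_comm i j, mul_comm (F i)]

theorem tri_swap₂₃ (δ : R) (ψ : R →+ k) (F G H : ℤ →₀ R) : tri δ ψ F G H = tri δ ψ F H G := by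
  refine Finsupp.sum_congr fun i _ => ?_
  let e : ℤ ≃ ℤ := (Equiv.addLeft i).trans (Equiv.neg ℤ)
  have he : ∀ j, e.symm j = -(i + j) := fun j => by simp [e]; ring
  refine (Finsupp.sum_apply_equiv_eq_sum e G H
    (fun j β γ => ψ (wgt3 δ i j * (F i * β * γ))) (fun _ _ => by simp) (fun _ _ => by simp)).trans
    (Finsupp.sum_congr fun j _ => ?_)
  rw [he, wgt3_neg_add, mul_right_comm]

theorem sum_sum_dite_eq_tri (δ : R) (ψ : R →+ k) (f g h : {i : ℤ // i ≠ 0} →₀ R) :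
    (f.sum fun i α => g.sum fun j β =>
      if hij : i.1 + j.1 ≠ 0 then
        ψ (wgt3 δ i.1 j.1 * (α * β * h ⟨-(i.1 + j.1), neg_ne_zero.mpr hij⟩))
      else 0) =
    tri δ ψ (extendZero f) (extendZero g) (extendZero h) := by
  simp only [tri, sum_extendZero]
  refine Finsupp.sum_congr fun i _ => Finsupp.sum_congr fun j _ => ?_
  split_ifs with hij
  · rw [← extendZero_apply h ⟨_, neg_ne_zero.mpr hij⟩]
  · rw [not_not.mp hij, neg_zero, extendZero_apply_zero, mul_zero, mul_zero, map_zero]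

theorem contract_sum_sum_single (δ : R) (ψ : R →+ k) (f g h : {i : ℤ // i ≠ 0} →₀ R) :
    contract ψ (f.sum fun i α => g.sum fun j β =>
        if hij : i.1 + j.1 ≠ 0 then Finsupp.single ⟨i.1 + j.1, hij⟩ (wgt δ i.1 j.1 * (α * β))
        else 0) h =
      f.sum fun i α => g.sum fun j β =>
        if hij : i.1 + j.1 ≠ 0 then
          ψ (wgt3 δ i.1 j.1 * (α * β * h ⟨-(i.1 + j.1), neg_ne_zero.mpr hij⟩))
        else 0 := by
  have hψ : ∀ (l : {i : ℤ // i ≠ 0}) (a b : R),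
      ψ ((a + b) * h (negIdx l)) = ψ (a * h (negIdx l)) + ψ (b * h (negIdx l)) :=
    fun _ _ _ => by rw [add_mul, map_add]
  rw [contract, Finsupp.sum_sum_index (fun _ => by simp) hψ]
  refine Finsupp.sum_congr fun i _ => ?_
  rw [Finsupp.sum_sum_index (fun _ => by simp) hψ]
  refine Finsupp.sum_congr fun j _ => ?_
  split_ifs
  · rw [Finsupp.sum_single_index (by simp), wgt_eq_wgt3, mul_assoc]
    rfl
  · exact Finsupp.sum_zero_index

end Cubic

variable {k S R : Type} [Field k] [CommRing S] [CommRing R] [Algebra k S] [Algebra k R]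

theorem pairH_eq (intS : S →ₗ[k] k) (intR : R →ₗ[k] k) (x y : Hins S R) :
    pairH intS intR x y = intS (x.1 * y.1) + contract intR.toAddMonoidHom x.2 y.2 :=
  rfl

theorem pairH_comm (intS : S →ₗ[k] k) (intR : R →ₗ[k] k) (x y : Hins S R) :
    pairH intS intR x y = pairH intS intR y x := by
  rw [pairH_eq, pairH_eq, mul_comm x.1, contract_comm]

theorem triA_eq (d : InsertionData S R) (intS : S →ₗ[k] k) (intR : R →ₗ[k] k)
    (a b c : S) (f g h : {i : ℤ // i ≠ 0} →₀ R) :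
    triA d intS intR (a, f) (b, g) (c, h) =
      intS (a * b * c)
      + contract (intR.toAddMonoidHom.comp (.mulLeft (d.res a))) g h
      + contract (intR.toAddMonoidHom.comp (.mulLeft (d.res b))) f h
      + contract (intR.toAddMonoidHom.comp (.mulLeft (d.res c))) f g
      + tri d.δ intR.toAddMonoidHom (extendZero f) (extendZero g) (extendZero h) := by
  rw [← sum_sum_dite_eq_tri]
  rfl

theorem triA_swap₁₂ (d : InsertionData S R) (intS : S →ₗ[k] k) (intR : R →ₗ[k] k)
    (x y z : Hins S R) : triA d intS intR x y z = triA d intS intR y x z := by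
  rw [triA_eq, triA_eq, mul_comm x.1, contract_comm _ x.2 y.2, tri_swap₁₂]
  abel

theorem triA_swap₂₃ (d : InsertionData S R) (intS : S →ₗ[k] k) (intR : R →ₗ[k] k)
    (x y z : Hins S R) : triA d intS intR x y z = triA d intS intR x z y := by
  rw [triA_eq, triA_eq, mul_right_comm x.1, contract_comm _ y.2 z.2, tri_swap₂₃]
  abel

theorem intS_gys_mul (d : InsertionData S R) (intS : S →ₗ[k] k) (intR : R →ₗ[k] k)
    (hint : ∀ x : R, intS (d.gys x) = intR x) (t : R) (c : S) :
    intS (d.gys t * c) = intR (d.res c * t) := by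
  rw [mul_comm, ← d.proj, hint]

theorem pairH_mulH_eq_triA (d : InsertionData S R) (intS : S →ₗ[k] k) (intR : R →ₗ[k] k)
    (hint : ∀ x : R, intS (d.gys x) = intR x) (x y z : Hins S R) :
    pairH intS intR (mulH d x y) z = triA d intS intR x y z := by
  obtain ⟨a, f⟩ := x
  obtain ⟨b, g⟩ := y
  obtain ⟨c, h⟩ := z
  have hS : intS ((a * b + f.sum fun i α => d.gys (α * g ⟨-i.1, neg_ne_zero.mpr i.2⟩)) * c) =
      intS (a * b * c) + contract (intR.toAddMonoidHom.comp (.mulLeft (d.res c))) f g := by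
    rw [add_mul, map_add, Finsupp.sum_mul, map_finsuppSum]
    exact congrArg _ (Finsupp.sum_congr fun i _ => intS_gys_mul d intS intR hint _ c)
  have hR₁ : contract intR.toAddMonoidHom (g.mapRange (d.res a * ·) (mul_zero _)) h =
      contract (intR.toAddMonoidHom.comp (.mulLeft (d.res a))) g h := by
    rw [contract, Finsupp.sum_mapRange_index (fun _ => by simp)]
    exact Finsupp.sum_congr fun j _ => congrArg intR (mul_assoc _ _ _)
  have hR₂ : contract intR.toAddMonoidHom (f.mapRange (· * d.res b) (zero_mul _)) h =
      contract (intR.toAddMonoidHom.comp (.mulLeft (d.res b))) f h := by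
    rw [contract, Finsupp.sum_mapRange_index (fun _ => by simp)]
    exact Finsupp.sum_congr fun i _ => congrArg intR ((mul_right_comm _ _ _).trans (mul_comm _ _))
  rw [pairH_eq, triA_eq, ← sum_sum_dite_eq_tri, ← contract_sum_sum_single]
  dsimp only [mulH]
  rw [contract_add_left, contract_add_left, hS, hR₁, hR₂]
  abel

end Hins

open Hins in
/-- The pairing on `𝔥` is invariant for the insertion product:
`(x·y, z) = (x, y·z)`, and `(x·y, z)` equals the totally symmetric trilinear
form `A(x, y, z)`. Here `∫_S ∘ gys = ∫_R`. -/
theorem insertion_pairing_invariant {k S R : Type} [Field k] [CommRing S] [CommRing R]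
    [Algebra k S] [Algebra k R] (d : InsertionData S R)
    (intS : S →ₗ[k] k) (intR : R →ₗ[k] k)
    (hint : ∀ x : R, intS (d.gys x) = intR x) :
    (∀ x y z : Hins S R,
        pairH intS intR (mulH d x y) z = triA d intS intR x y z) ∧
    (∀ x y z : Hins S R, triA d intS intR x y z = triA d intS intR y x z) ∧
    (∀ x y z : Hins S R, triA d intS intR x y z = triA d intS intR x z y) ∧
    (∀ x y z : Hins S R,
        pairH intS intR (mulH d x y) z = pairH intS intR x (mulH d y z)) := by
  refine ⟨pairH_mulH_eq_triA d intS intR hint, triA_swap₁₂ d intS intR,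
    triA_swap₂₃ d intS intR, fun x y z => ?_⟩
  rw [pairH_mulH_eq_triA d intS intR hint, pairH_comm, pairH_mulH_eq_triA d intS intR hint,
    triA_swap₁₂, triA_swap₂₃]
end

section
/- Let A be an associative (not necessarily commutative) k-algebra and L, Z ∈ A elements satisfying LZ − ZL = Z. Define l_m = L(ZL)^m for integers m ≥ 0. Then for all m, n ≥ 0: l_m l_n − l_n l_m = (n − m) l_{m+n}. -/
/-!
With `W = Z L`, the relation `⁅L, Z⁆ = Z` gives `⁅L, W⁆ = W`, so `W` is an eigenvector of the
derivation `⁅L, ·⁆` with eigenvalue `1`, and hence `⁅L, W ^ a⁆ = a • W ^ a`. Moving `W ^ a` past `L`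
in `l_a l_b = L W ^ a L W ^ b` therefore gives `l_a l_b = L l_{a+b} - a • l_{a+b}`, and the
bracket `l_m l_n - l_n l_m` is the difference of two such expressions.
-/

namespace Ring

variable {A : Type*} [Ring A]

theorem lie_mul_right (a b c : A) : ⁅a, b * c⁆ = ⁅a, b⁆ * c + b * ⁅a, c⁆ := by
  simp only [lie_def, mul_sub, sub_mul, mul_assoc]
  abel

theorem lie_mul_self_of_lie_eq_self {L Z : A} (h : ⁅L, Z⁆ = Z) : ⁅L, Z * L⁆ = Z * L := by
  rw [lie_mul_right, h, (Commute.refl L).lie_eq, mul_zero, add_zero]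

variable {L W : A}

theorem lie_pow_of_lie_eq_self (hW : ⁅L, W⁆ = W) (n : ℕ) : ⁅L, W ^ n⁆ = n • W ^ n := by
  induction n with
  | zero => simpa using (Commute.one_right L).lie_eq
  | succ n ih =>
    rw [pow_succ, lie_mul_right, ih, hW, smul_mul_assoc, succ_nsmul]

theorem mul_pow_mul_mul_pow_of_lie_eq_self (hW : ⁅L, W⁆ = W) (a b : ℕ) :
    (L * W ^ a) * (L * W ^ b) = L * (L * W ^ (a + b)) - a • (L * W ^ (a + b)) := by
  have hswap : W ^ a * L = L * W ^ a - a • W ^ a := by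
    rw [← lie_pow_of_lie_eq_self hW a, lie_def, sub_sub_cancel]
  rw [mul_assoc, ← mul_assoc (W ^ a), hswap, sub_mul, smul_mul_assoc, mul_assoc, ← pow_add,
    mul_sub, mul_smul_comm]

end Ring

theorem virasoro_bracket_general {A : Type} [Ring A]
    (L Z : A) (h : L * Z - Z * L = Z) (m n : ℕ) :
    (L * (Z * L) ^ m) * (L * (Z * L) ^ n) - (L * (Z * L) ^ n) * (L * (Z * L) ^ m)
      = ((n : ℤ) - (m : ℤ)) • (L * (Z * L) ^ (m + n)) := by
  have hW : ⁅L, Z * L⁆ = Z * L := Ring.lie_mul_self_of_lie_eq_self h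
  rw [Ring.mul_pow_mul_mul_pow_of_lie_eq_self hW, Ring.mul_pow_mul_mul_pow_of_lie_eq_self hW,
    add_comm n m, sub_smul, natCast_zsmul, natCast_zsmul]
  abel

/-- Abstract Virasoro bracket relation: in an associative `k`-algebra, if
`L Z - Z L = Z` and `l_m = L (Z L)^m`, then `l_m l_n - l_n l_m = (n - m) l_{m+n}`. -/
theorem virasoro_bracket {k A : Type} [CommRing k] [Ring A] [Algebra k A]
    (L Z : A) (h : L * Z - Z * L = Z) (m n : ℕ) :
    (L * (Z * L) ^ m) * (L * (Z * L) ^ n) - (L * (Z * L) ^ n) * (L * (Z * L) ^ m)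
      = ((n : ℤ) - (m : ℤ)) • (L * (Z * L) ^ (m + n)) :=
  virasoro_bracket_general L Z h m n
end

section
/- Let A be an associative k-algebra, L ∈ A, and Z ∈ A invertible with LZ − ZL = Z. Define l_{-1} = Z^{-1} and l_n = L(ZL)^n for n ≥ 0. Then for all n ≥ 0: l_{-1} l_n − l_n l_{-1} = (n + 1) l_{n-1}. -/
/-!
Write `u = Z⁻¹` and `x = Z L`. Conjugating `L Z - Z L = Z` by `u` gives `u L - L u = u`, and
then `u x - x u = 1`: the operator `[u, ·]` is a derivation sending `L` to `u` and `x` to the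
central element `1`, so it acts on `x` like `d/dx`. Hence
`[u, L x^n] = u x^n + n L x^(n-1)`, and `u x^n = L x^(n-1)` for `n ≥ 1`.
-/

/-- `l_m` for `m ≥ -1`: `l_{-1} = Z⁻¹` and `l_m = L (Z L)^m` for `m ≥ 0`. -/
noncomputable def lop {A : Type} [Ring A] (L : A) (Z : Aˣ) (m : ℤ) : A :=
  if m = -1 then (↑(Z⁻¹) : A) else L * ((↑Z : A) * L) ^ m.toNat

section CanonicalCommutation

variable {R : Type*} [Ring R]

theorem mul_pow_succ_sub_pow_succ_mul_of_mul_sub_mul_eq_one {a x : R} (h : a * x - x * a = 1)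
    (n : ℕ) : a * x ^ (n + 1) - x ^ (n + 1) * a = (n + 1) • x ^ n := by
  induction n with
  | zero => simpa using h
  | succ n ih =>
    calc a * x ^ (n + 2) - x ^ (n + 2) * a
        = (a * x ^ (n + 1) - x ^ (n + 1) * a) * x + x ^ (n + 1) * (a * x - x * a) := by
          noncomm_ring
      _ = (n + 1) • x ^ (n + 1) + x ^ (n + 1) := by
          rw [ih, h, mul_one, smul_mul_assoc, ← pow_succ]
      _ = (n + 2) • x ^ (n + 1) := (succ_nsmul _ _).symm

variable {L : R} {Z : Rˣ}

theorem Units.inv_mul_sub_mul_inv_eq_inv_of_mul_sub_mul_eq_self (h : L * Z - Z * L = Z) :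
    ↑Z⁻¹ * L - L * ↑Z⁻¹ = (↑Z⁻¹ : R) :=
  calc ↑Z⁻¹ * L - L * ↑Z⁻¹ = ↑Z⁻¹ * (L * Z - Z * L) * ↑Z⁻¹ := by
        simp only [mul_sub, sub_mul, mul_assoc, Units.mul_inv, mul_one, Units.inv_mul_cancel_left]
    _ = ↑Z⁻¹ := by rw [h, Units.inv_mul, one_mul]

theorem Units.inv_mul_sub_mul_inv_eq_one_of_mul_sub_mul_eq_self (h : L * Z - Z * L = Z) :
    ↑Z⁻¹ * (Z * L) - Z * L * ↑Z⁻¹ = (1 : R) := by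
  have hL := Units.inv_mul_sub_mul_inv_eq_inv_of_mul_sub_mul_eq_self h
  calc ↑Z⁻¹ * (Z * L) - Z * L * ↑Z⁻¹ = Z * (↑Z⁻¹ * L - L * ↑Z⁻¹) := by
        simp only [mul_sub, Units.inv_mul_cancel_left, Units.mul_inv_cancel_left, mul_assoc]
    _ = 1 := by rw [hL, Units.mul_inv]

end CanonicalCommutation

section

variable {A : Type} [Ring A] (L : A) (Z : Aˣ)

theorem lop_neg_one : lop L Z (-1) = ↑Z⁻¹ := if_pos rfl

theorem lop_natCast (n : ℕ) : lop L Z n = L * (Z * L) ^ n := by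
  simp [lop]

end

theorem virasoro_bracket_neg_one_general {A : Type} [Ring A]
    (L : A) (Z : Aˣ) (h : L * (↑Z : A) - (↑Z : A) * L = (↑Z : A)) (n : ℕ) :
    lop L Z (-1) * lop L Z (n : ℤ) - lop L Z (n : ℤ) * lop L Z (-1)
      = ((n : ℤ) + 1) • lop L Z ((n : ℤ) - 1) := by
  have hL := Units.inv_mul_sub_mul_inv_eq_inv_of_mul_sub_mul_eq_self h
  have hx := Units.inv_mul_sub_mul_inv_eq_one_of_mul_sub_mul_eq_self h
  have leibniz : ↑Z⁻¹ * (L * (Z * L) ^ n) - L * (Z * L) ^ n * ↑Z⁻¹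
      = (↑Z⁻¹ * L - L * ↑Z⁻¹) * (Z * L) ^ n
        + L * (↑Z⁻¹ * (Z * L) ^ n - (Z * L) ^ n * ↑Z⁻¹) := by
    noncomm_ring
  rw [lop_neg_one, lop_natCast, leibniz, hL]
  cases n with
  | zero => simp [lop_neg_one]
  | succ m =>
    have hshift : ((m + 1 : ℕ) : ℤ) - 1 = m := by omega
    rw [mul_pow_succ_sub_pow_succ_mul_of_mul_sub_mul_eq_one hx, hshift, lop_natCast, pow_succ',
      ← mul_assoc, Units.inv_mul_cancel_left, mul_smul_comm, ← succ_nsmul', ← natCast_zsmul]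
    push_cast
    rfl

/-- The `m = -1` case of the Virasoro bracket relation: if `Z` is invertible and
`L Z - Z L = Z`, then with `l_{-1} = Z⁻¹` and `l_n = L (Z L)^n` we have
`l_{-1} l_n - l_n l_{-1} = (n + 1) l_{n-1}` for all `n ≥ 0`. -/
theorem virasoro_bracket_neg_one {k A : Type} [CommRing k] [Ring A] [Algebra k A]
    (L : A) (Z : Aˣ) (h : L * (↑Z : A) - (↑Z : A) * L = (↑Z : A)) (n : ℕ) :
    lop L Z (-1) * lop L Z (n : ℤ) - lop L Z (n : ℤ) * lop L Z (-1)
      = ((n : ℤ) + 1) • lop L Z ((n : ℤ) - 1) :=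
  virasoro_bracket_neg_one_general L Z h n
end
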